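/- There exists β* ∈ (0.84, 0.842) such that for all β ∈ (β*, (1/2)(1+1/√2)], h(β) < 3 − 4·(1/2 + √(1/8 − (β−1/2)²)); i.e., the quantum monogamy relation ensures the DIQKD security condition in a nonempty quantum-attainable interval. -/

import Mathlib

/-!
Both sides of the security condition move monotonically on the quantum interval: `h` decreases
on `[1/2, 1]`, while `f_Q` decreases for `β ≥ 1/2`, so `3 - 4 f_Q` increases. Hence it suffices to
verify the strict inequality at the single threshold `β* = 0.8415`, where it holds with a margin
of about `0.003`; there the logarithms are bounded by truncating the series of
`log ((1 + x) / (1 - x))`.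
-/

open Real Set

/-- Binary Shannon entropy (base-2 logarithm). -/
noncomputable def binH (p : ℝ) : ℝ :=
  -(p * Real.logb 2 p) - (1 - p) * Real.logb 2 (1 - p)

lemma binH_eq_binEntropy_div_log_two (p : ℝ) : binH p = binEntropy p / log 2 := by
  simp only [binH, binEntropy, logb, log_inv]
  ring

lemma binH_antitoneOn : AntitoneOn binH (Icc 2⁻¹ 1) := by
  intro a ha b hb hab
  simp only [binH_eq_binEntropy_div_log_two]
  gcongr
  exact binEntropy_strictAntiOn.antitoneOn ha hb hab

/-- The quantum monogamy bound `f_Q` on `β(B,E)` given `β(A,B) = β`. -/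
noncomputable def monogamyBound (β : ℝ) : ℝ :=
  1 / 2 + √(1 / 8 - (β - 1 / 2) ^ 2)

lemma monogamyBound_antitoneOn : AntitoneOn monogamyBound (Ici (1 / 2)) := by
  intro a ha b hb hab
  simp only [mem_Ici] at ha hb
  simp only [monogamyBound, add_le_add_iff_left]
  gcongr

lemma log_2000_div_1683_lt : log (2000 / 1683) < 0.17258 := by
  have h := log_div_le_sum_range_add (x := 317 / 3683) (by norm_num) (by norm_num) 2
  norm_num [Finset.sum_range_succ] at h
  linarith

lemma log_500_div_317_lt : log (500 / 317) < 0.4567 := by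
  have h := log_div_le_sum_range_add (x := 183 / 817) (by norm_num) (by norm_num) 2
  norm_num [Finset.sum_range_succ] at h
  linarith

lemma binEntropy_threshold_lt : binEntropy 0.8415 < 0.633876 * log 2 := by
  have h_expand : binEntropy 0.8415 =
      0.8415 * log (2000 / 1683) + 0.1585 * (2 * log 2 + log (500 / 317)) := by
    -- the series converges too slowly at `2000 / 317`, so a factor `4` is split off first
    have h_split : log (2000 / 317) = 2 * log 2 + log (500 / 317) := by
      rw [← log_rpow two_pos, ← log_mul (by positivity) (by norm_num)]
      norm_num
    rw [← h_split]
    simp only [binEntropy]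
    norm_num
  rw [h_expand]
  linarith [log_2000_div_1683_lt, log_500_div_317_lt, log_two_gt_d9]

lemma monogamyBound_threshold_le : monogamyBound 0.8415 ≤ 0.591531 := by
  have h : √(1 / 8 - (0.8415 - 1 / 2) ^ 2 : ℝ) ≤ 0.091531 := by
    rw [sqrt_le_left (by norm_num)]
    norm_num
  rw [monogamyBound]
  linarith

lemma binH_threshold_lt : binH 0.8415 < 3 - 4 * monogamyBound 0.8415 := by
  rw [binH_eq_binEntropy_div_log_two, div_lt_iff₀ (log_pos one_lt_two)]
  nlinarith [binEntropy_threshold_lt, monogamyBound_threshold_le, log_two_gt_d9]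

/-- there is a threshold β* ∈ (0.84, 0.842) such that the quantum
    monogamy relation ensures the DIQKD security condition for all
    β ∈ (β*, (1/2)(1+1/√2)]. -/
theorem quantum_security_interval :
    ∃ βstar : ℝ, 0.84 < βstar ∧ βstar < 0.842 ∧
      ∀ β : ℝ, βstar < β → β ≤ (1/2) * (1 + 1 / Real.sqrt 2) →
        binH β < 3 - 4 * (1/2 + Real.sqrt (1/8 - (β - 1/2)^2)) := by
  refine ⟨0.8415, by norm_num, by norm_num, fun β hβ_gt hβ_le => ?_⟩
  have hβ_le_one : β ≤ 1 := by
    have : 1 / √2 ≤ 1 := (div_le_one (by positivity)).mpr one_lt_sqrt_two.le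
    linarith
  have hβstar_mem : (0.8415 : ℝ) ∈ Icc 2⁻¹ 1 := by norm_num
  calc binH β ≤ binH 0.8415 := binH_antitoneOn hβstar_mem ⟨by linarith, hβ_le_one⟩ hβ_gt.le
    _ < 3 - 4 * monogamyBound 0.8415 := binH_threshold_lt
    _ ≤ 3 - 4 * monogamyBound β := by
      have := monogamyBound_antitoneOn (by norm_num : (0.8415 : ℝ) ∈ Ici (1 / 2))
        (by norm_num; linarith : β ∈ Ici (1 / 2)) hβ_gt.le
      linarith
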